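/- arXiv:2311.04471 — 4 statements merged into one kernel-verified Lean document; each statement's English description precedes it below -/
import Mathlib

section
/- Let s > 1 be a real number. For every ε ≥ 0 and every u ∈ ℝ one has |f_ε(u) − f_0(u)| ≤ ε·|u|^s·ln(ln(e + |u|)). -/
/-- The non-power nonlinearity `f_ε(u) = |u|^{s-1} u / (ln(e+|u|))^ε`. -/
noncomputable def fNP (s ε u : ℝ) : ℝ :=
  |u| ^ (s - 1) * u / Real.log (Real.exp 1 + |u|) ^ ε

theorem stmt0 (s : ℝ) (hs : 1 < s) (ε : ℝ) (hε : 0 ≤ ε) (u : ℝ) :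
    |fNP s ε u - fNP s 0 u| ≤
      ε * |u| ^ s * Real.log (Real.log (Real.exp 1 + |u|)) := by
  rcases eq_or_ne u 0 with rfl | hu
  · simp [fNP, Real.zero_rpow (by linarith : s ≠ (0:ℝ))]
  · have hu0 : (0:ℝ) < |u| := abs_pos.mpr hu
    set L : ℝ := Real.log (Real.exp 1 + |u|) with hLdef
    have hepos : (0:ℝ) < Real.exp 1 + |u| := by positivity
    have hL1 : 1 ≤ L := by
      rw [hLdef, Real.le_log_iff_exp_le hepos]
      simp [abs_nonneg u]
    have hLpos : (0:ℝ) < L := lt_of_lt_of_le one_pos hL1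
    have hLe : L ^ (-ε) = Real.exp (Real.log L * (-ε)) := by
      rw [Real.rpow_def_of_pos hLpos]
    have hLle1 : L ^ (-ε) ≤ 1 :=
      Real.rpow_le_one_of_one_le_of_nonpos hL1 (neg_nonpos.mpr hε)
    have hkey : 1 - L ^ (-ε) ≤ ε * Real.log L := by
      have := Real.add_one_le_exp (Real.log L * (-ε))
      rw [← hLe] at this
      nlinarith
    have habs : |u| ^ (s - 1) * |u| = |u| ^ s := by
      rw [← Real.rpow_add_one (ne_of_gt hu0)]; ring_nf
    have heq : fNP s ε u - fNP s 0 u = |u| ^ (s - 1) * u * (L ^ (-ε) - 1) := by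
      rw [fNP, fNP, Real.rpow_zero, div_one, Real.rpow_neg hLpos.le]
      rw [← hLdef]
      field_simp
    rw [heq, abs_mul, abs_mul, abs_of_nonneg (Real.rpow_nonneg (abs_nonneg u) _)]
    rw [abs_of_nonpos (by linarith : L ^ (-ε) - 1 ≤ 0)]
    have : |u| ^ (s - 1) * |u| * (-(L ^ (-ε) - 1)) ≤ |u| ^ s * (ε * Real.log L) := by
      rw [habs]
      have h1 : (0:ℝ) ≤ |u| ^ s := Real.rpow_nonneg (abs_nonneg u) s
      nlinarith
    calc |u| ^ (s - 1) * |u| * (-(L ^ (-ε) - 1)) ≤ |u| ^ s * (ε * Real.log L) := this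
      _ = ε * |u| ^ s * Real.log L := by ring
end

section
/- Let s > 1 be a real number. For every ε ∈ [0,1] the function f_ε is differentiable on ℝ, and there is a constant C > 0 depending only on s (one may take C = s + 1) such that |f_ε′(u)| ≤ C·|u|^{s−1} for all u ∈ ℝ. -/
lemma fNP_aux_L_pos (u : ℝ) : 1 ≤ Real.log (Real.exp 1 + |u|) := by
  calc (1 : ℝ) = Real.log (Real.exp 1) := (Real.log_exp 1).symm
    _ ≤ Real.log (Real.exp 1 + |u|) :=
      Real.log_le_log (Real.exp_pos 1) (le_add_of_nonneg_right (abs_nonneg u))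

lemma fNP_hasDerivAt_zero (s ε : ℝ) (hs : 1 < s) (hε0 : 0 ≤ ε) :
    HasDerivAt (fNP s ε) 0 0 := by
  rw [hasDerivAt_iff_tendsto_slope]
  have h0 : fNP s ε 0 = 0 := by
    simp [fNP, Real.zero_rpow (by linarith : s - 1 ≠ 0)]
  have hb : ∀ x : ℝ, ‖slope (fNP s ε) 0 x‖ ≤ |x| ^ (s - 1) := by
    intro x
    rcases eq_or_ne x 0 with rfl | hx
    · simp [slope, Real.zero_rpow (by linarith : s - 1 ≠ 0)]
    · have hL : 1 ≤ Real.log (Real.exp 1 + |x|) := fNP_aux_L_pos x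
      have hD : 1 ≤ Real.log (Real.exp 1 + |x|) ^ ε := Real.one_le_rpow hL hε0
      have hxp : (0:ℝ) < |x| := abs_pos.mpr hx
      rw [slope_def_field, h0, sub_zero, sub_zero]
      have : fNP s ε x / x = |x| ^ (s - 1) / Real.log (Real.exp 1 + |x|) ^ ε := by
        rw [fNP]; field_simp
      rw [this, Real.norm_eq_abs, abs_div]
      have h1 : |(|x| ^ (s-1))| = |x| ^ (s-1) := abs_of_nonneg (by positivity)
      have h2 : |Real.log (Real.exp 1 + |x|) ^ ε| = Real.log (Real.exp 1 + |x|) ^ ε :=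
        abs_of_nonneg (by positivity)
      rw [h1, h2]
      exact div_le_self (by positivity) hD
  have hg : Filter.Tendsto (fun x : ℝ => |x| ^ (s - 1)) (nhdsWithin 0 {(0:ℝ)}ᶜ) (nhds 0) := by
    have hc : ContinuousAt (fun x : ℝ => |x| ^ (s - 1)) 0 := by
      exact (Real.continuousAt_rpow_const _ _ (Or.inr (by linarith))).comp
        continuous_abs.continuousAt
    have := hc.tendsto.mono_left (nhdsWithin_le_nhds : nhdsWithin 0 {(0:ℝ)}ᶜ ≤ nhds 0)
    simpa [Real.zero_rpow (by linarith : s - 1 ≠ 0)] using this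
  exact squeeze_zero_norm hb hg

lemma fNP_hasDerivAt (s ε : ℝ) (hs : 1 < s) (hε0 : 0 ≤ ε) (hε1 : ε ≤ 1) (u : ℝ)
    (hu : u ≠ 0) :
    ∃ d, HasDerivAt (fNP s ε) d u ∧ |d| ≤ (s + 1) * |u| ^ (s - 1) := by
  set a : ℝ := |u| with ha_def
  have ha : 0 < a := abs_pos.mpr hu
  set L : ℝ := Real.log (Real.exp 1 + |u|) with hL_def
  have hL : 1 ≤ L := fNP_aux_L_pos u
  have hLpos : 0 < L := by linarith
  have hD1 : 1 ≤ L ^ ε := Real.one_le_rpow hL hε0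
  have hDpos : 0 < L ^ ε := by linarith
  set σ : ℝ := (SignType.sign u : ℝ) with hσ_def
  have hσ : |σ| = 1 := by
    rcases lt_or_gt_of_ne hu with h | h <;> simp [hσ_def, h]
  have hepos : (0:ℝ) < Real.exp 1 + a := by positivity
  -- derivative of numerator
  have habs : HasDerivAt (fun x : ℝ => |x|) σ u := hasDerivAt_abs hu
  have hpow : HasDerivAt (fun x : ℝ => |x| ^ (s-1)) (σ * (s-1) * a ^ (s-1-1)) u :=
    habs.rpow_const (Or.inl ha.ne')
  have hnum : HasDerivAt (fun x : ℝ => |x| ^ (s-1) * x)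
      (σ * (s-1) * a ^ (s-1-1) * u + a ^ (s-1) * 1) u :=
    hpow.mul (hasDerivAt_id u)
  -- derivative of denominator
  have hlog : HasDerivAt (fun x : ℝ => Real.log (Real.exp 1 + |x|)) ((0 + σ) / (Real.exp 1 + a)) u :=
    ((hasDerivAt_const u (Real.exp 1)).add habs).log hepos.ne'
  have hden : HasDerivAt (fun x : ℝ => Real.log (Real.exp 1 + |x|) ^ ε)
      ((0 + σ) / (Real.exp 1 + a) * ε * L ^ (ε - 1)) u :=
    hlog.rpow_const (Or.inl hLpos.ne')
  have hf : HasDerivAt (fNP s ε)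
      (((σ * (s-1) * a ^ (s-1-1) * u + a ^ (s-1) * 1) * (L ^ ε)
        - (a ^ (s-1) * u) * ((0 + σ) / (Real.exp 1 + a) * ε * L ^ (ε - 1))) / (L ^ ε) ^ 2) u := by
    exact hnum.div hden hDpos.ne'
  refine ⟨_, hf, ?_⟩
  -- now bound the derivative
  have haa : a ^ (s-1-1) * a = a ^ (s-1) := by
    rw [← Real.rpow_add_one ha.ne', show s-1-1+1 = s-1 by ring]
  have hDD : (L ^ ε) ^ 2 = L ^ (ε + ε) := by
    rw [Real.rpow_add hLpos, sq]
  have hσu : |σ * u| = a := by rw [abs_mul, hσ, one_mul]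
  have hnum_bd : |σ * (s-1) * a ^ (s-1-1) * u + a ^ (s-1) * 1| ≤ s * a ^ (s-1) := by
    have h1 : |σ * (s-1) * a ^ (s-1-1) * u| = (s-1) * a ^ (s-1) := by
      have : σ * (s-1) * a ^ (s-1-1) * u = (s-1) * a ^ (s-1-1) * (σ * u) := by ring
      rw [this, abs_mul, abs_of_nonneg (mul_nonneg (by linarith) (Real.rpow_nonneg ha.le _) : (0:ℝ) ≤ (s-1) * a ^ (s-1-1)), hσu]
      rw [mul_assoc, haa]
    calc |σ * (s-1) * a ^ (s-1-1) * u + a ^ (s-1) * 1|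
        ≤ |σ * (s-1) * a ^ (s-1-1) * u| + |a ^ (s-1) * 1| := abs_add_le _ _
      _ = (s-1) * a ^ (s-1) + a ^ (s-1) := by
          rw [h1, mul_one, abs_of_nonneg (Real.rpow_nonneg ha.le _)]
      _ = s * a ^ (s-1) := by ring
  have hden_bd : |(a ^ (s-1) * u) * ((0 + σ) / (Real.exp 1 + a) * ε * L ^ (ε - 1))|
      ≤ a ^ (s-1) * (L ^ ε) ^ 2 := by
    have heq : (a ^ (s-1) * u) * ((0 + σ) / (Real.exp 1 + a) * ε * L ^ (ε - 1))
        = a ^ (s-1) * (σ * u) * ε * L ^ (ε-1) / (Real.exp 1 + a) := by ring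
    rw [heq, abs_div, abs_of_pos hepos, abs_mul, abs_mul, abs_mul, hσu,
      abs_of_nonneg (Real.rpow_nonneg ha.le _), abs_of_nonneg hε0,
      abs_of_nonneg (Real.rpow_pos_of_pos hLpos (ε-1)).le]
    rw [hDD]
    rw [div_le_iff₀ hepos]
    have h1 : a ≤ Real.exp 1 + a := by linarith [Real.exp_pos 1]
    have h2 : L ^ (ε-1) ≤ L ^ (ε+ε) := Real.rpow_le_rpow_of_exponent_le hL (by linarith)
    calc a ^ (s-1) * a * ε * L ^ (ε-1)
        ≤ a ^ (s-1) * a * 1 * L ^ (ε+ε) := by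
          apply mul_le_mul _ h2 (Real.rpow_pos_of_pos hLpos _).le (by positivity)
          exact mul_le_mul_of_nonneg_left hε1 (by positivity)
      _ = a ^ (s-1) * L ^ (ε+ε) * a := by ring
      _ ≤ a ^ (s-1) * L ^ (ε+ε) * (Real.exp 1 + a) := by
          exact mul_le_mul_of_nonneg_left h1 (by positivity)
  have hsq : (0:ℝ) < (L ^ ε) ^ 2 := by positivity
  rw [abs_div, abs_of_pos hsq, div_le_iff₀ hsq]
  have hD_le : L ^ ε ≤ (L ^ ε) ^ 2 := by nlinarith
  calc |(σ * (s-1) * a ^ (s-1-1) * u + a ^ (s-1) * 1) * (L ^ ε)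
        - (a ^ (s-1) * u) * ((0 + σ) / (Real.exp 1 + a) * ε * L ^ (ε - 1))|
      ≤ |(σ * (s-1) * a ^ (s-1-1) * u + a ^ (s-1) * 1) * (L ^ ε)|
        + |(a ^ (s-1) * u) * ((0 + σ) / (Real.exp 1 + a) * ε * L ^ (ε - 1))| := abs_sub _ _
    _ ≤ s * a ^ (s-1) * (L ^ ε) ^ 2 + a ^ (s-1) * (L ^ ε) ^ 2 := by
        refine add_le_add ?_ hden_bd
        rw [abs_mul, abs_of_pos hDpos]
        calc |σ * (s-1) * a ^ (s-1-1) * u + a ^ (s-1) * 1| * L ^ ε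
            ≤ (s * a ^ (s-1)) * L ^ ε :=
              mul_le_mul_of_nonneg_right hnum_bd hDpos.le
          _ ≤ (s * a ^ (s-1)) * (L ^ ε) ^ 2 :=
              mul_le_mul_of_nonneg_left hD_le (by positivity)
          _ = s * a ^ (s-1) * (L ^ ε) ^ 2 := rfl
    _ = (s + 1) * a ^ (s-1) * (L ^ ε) ^ 2 := by ring

theorem stmt1 (s : ℝ) (hs : 1 < s) :
    (∀ ε ∈ Set.Icc (0 : ℝ) 1, Differentiable ℝ (fNP s ε)) ∧
    ∃ C > 0, ∀ ε ∈ Set.Icc (0 : ℝ) 1, ∀ u : ℝ,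
      |deriv (fNP s ε) u| ≤ C * |u| ^ (s - 1) := by
  constructor
  · intro ε hε u
    rcases eq_or_ne u 0 with rfl | hu
    · exact (fNP_hasDerivAt_zero s ε hs hε.1).differentiableAt
    · exact (fNP_hasDerivAt s ε hs hε.1 hε.2 u hu).choose_spec.1.differentiableAt
  · refine ⟨s + 1, by linarith, ?_⟩
    intro ε hε u
    rcases eq_or_ne u 0 with rfl | hu
    · rw [(fNP_hasDerivAt_zero s ε hs hε.1).deriv]
      simp [Real.zero_rpow (by linarith : s - 1 ≠ 0)]
    · obtain ⟨d, hd, hbd⟩ := fNP_hasDerivAt s ε hs hε.1 hε.2 u hu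
      rw [hd.deriv]
      exact hbd
end

section
/- Let 0 < t < 1 be a real number. There exists a constant C > 0 depending only on t such that for every u > 0 and every v ∈ ℝ one has | |u + v|^t·(u + v) − u^{t+1} − (1 + t)·u^t·v | ≤ C · min{ u^{t−1}·v² , |v|^{t+1} }. -/
/-!
The left-hand side is the first-order Taylor remainder at `u` of `f x = |x| ^ t * x`, a `C¹`
function with `f' x = (1 + t) * |x| ^ t`. Since `f'` is `t`-Hölder
(`|a ^ t - b ^ t| ≤ |a - b| ^ t`), the remainder is at most `(1 + t) * |v| ^ (t + 1)` for every `v`. If `|v| ≤ u / 2`, the segment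
from `u` to `u + v` stays in `[u / 2, ∞)`, where `f'` is Lipschitz with constant
`(1 + t) * t * (u / 2) ^ (t - 1)`, which gives the bound by `u ^ (t - 1) * v ^ 2`; if `|v| > u / 2`,
the first bound already gives it, as
`|v| ^ (t + 1) = |v| ^ (t - 1) * v ^ 2 ≤ (u / 2) ^ (t - 1) * v ^ 2`.
-/

open Real Set

lemma abs_rpow_sub_rpow_le_rpow_abs_sub {p a b : ℝ} (ha : 0 ≤ a) (hb : 0 ≤ b) (hp0 : 0 ≤ p)
    (hp1 : p ≤ 1) : |a ^ p - b ^ p| ≤ |a - b| ^ p := by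
  have key : ∀ {x y : ℝ}, 0 ≤ x → 0 ≤ y → x ^ p - y ^ p ≤ |x - y| ^ p := fun {x y} hx hy => by
    have : x ^ p ≤ y ^ p + |x - y| ^ p :=
      calc x ^ p ≤ (y + |x - y|) ^ p := by gcongr; linarith [le_abs_self (x - y)]
        _ ≤ y ^ p + |x - y| ^ p := rpow_add_le_add_rpow hy (abs_nonneg _) hp0 hp1
    linarith
  rw [abs_sub_le_iff]
  exact ⟨key ha hb, abs_sub_comm a b ▸ key hb ha⟩

lemma abs_rpow_sub_rpow_le_mul_abs_sub {p a b c : ℝ} (hp0 : 0 ≤ p) (hp1 : p ≤ 1) (hc : 0 < c)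
    (ha : c ≤ a) (hb : c ≤ b) : |a ^ p - b ^ p| ≤ p * c ^ (p - 1) * |a - b| := by
  refine (convex_Ici c).norm_image_sub_le_of_norm_hasDerivWithin_le
    (fun x hx => (hasDerivAt_rpow_const (Or.inl (hc.trans_le hx).ne')).hasDerivWithinAt)
    (fun x (hx : c ≤ x) => ?_) hb ha
  rw [norm_mul, norm_of_nonneg hp0, norm_of_nonneg (rpow_nonneg (hc.le.trans hx) _)]
  exact mul_le_mul_of_nonneg_left (rpow_le_rpow_of_nonpos hc hx (by linarith)) hp0

lemma abs_sub_sub_deriv_mul_le {f f' : ℝ → ℝ} {a b K : ℝ}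
    (hf : ∀ x ∈ uIcc a b, HasDerivAt f (f' x) x) (hf' : ∀ x ∈ uIcc a b, |f' x - f' a| ≤ K) :
    |f b - f a - f' a * (b - a)| ≤ K * |b - a| := by
  have := (convex_uIcc a b).norm_image_sub_le_of_norm_hasDerivWithin_le
    (f := fun x => f x - f' a * x) (f' := fun x => f' x - f' a)
    (fun x hx => ((hf x hx).sub ((hasDerivAt_id x).const_mul (f' a))).hasDerivWithinAt
      |>.congr_deriv (by simp)) hf' left_mem_uIcc right_mem_uIcc
  rw [show f b - f a - f' a * (b - a) = f b - f' a * b - (f a - f' a * a) by ring]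
  simpa only [Real.norm_eq_abs] using this

noncomputable def oddRpow (p x : ℝ) : ℝ := |x| ^ p * x

lemma hasDerivAt_oddRpow {p : ℝ} (hp : 0 < p) (x : ℝ) :
    HasDerivAt (oddRpow p) ((p + 1) * |x| ^ p) x := by
  have hcont : Continuous fun x : ℝ => |x| ^ p :=
    continuous_abs.rpow_const fun _ => Or.inr hp.le
  refine hasDerivAt_of_hasDerivAt_of_ne' (x := 0) (g := fun y => (p + 1) * |y| ^ p)
    (fun y hy => ?_) (hcont.mul continuous_id).continuousAt
    (continuous_const.mul hcont).continuousAt x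
  have hy' : 0 < |y| := abs_pos.mpr hy
  refine (((hasDerivAt_abs hy).rpow_const (p := p) (Or.inl hy'.ne')).mul
    (hasDerivAt_id' y)).congr_deriv ?_
  have hpow : |y| ^ (p - 1) * |y| = |y| ^ p := by
    rw [← rpow_add_one' hy'.le (by simpa using hp.ne'), sub_add_cancel]
  linear_combination (p * |y| ^ (p - 1)) * sign_mul_self y + p * hpow

lemma rpow_div_two_le {u s : ℝ} (hu : 0 ≤ u) (hs : -1 ≤ s) : (u / 2) ^ s ≤ 2 * u ^ s := by
  have h2 : (2 : ℝ)⁻¹ ≤ 2 ^ s := by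
    simpa [rpow_neg_one] using rpow_le_rpow_of_exponent_le (by norm_num : (1 : ℝ) ≤ 2) hs
  rw [div_rpow hu zero_le_two, div_le_iff₀ (by positivity)]
  nlinarith [rpow_nonneg hu s]

section TaylorRemainder

variable {p : ℝ}

lemma abs_oddRpow_add_sub_sub_le_rpow (hp0 : 0 < p) (hp1 : p ≤ 1) (u v : ℝ) :
    |oddRpow p (u + v) - oddRpow p u - (p + 1) * |u| ^ p * v| ≤ (p + 1) * |v| ^ (p + 1) := by
  have hf' : ∀ x ∈ uIcc u (u + v),
      |(p + 1) * |x| ^ p - (p + 1) * |u| ^ p| ≤ (p + 1) * |v| ^ p := by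
    intro x hx
    have hxu : |x - u| ≤ |v| := by simpa using abs_sub_left_of_mem_uIcc hx
    rw [← mul_sub, abs_mul, abs_of_pos (by linarith)]
    gcongr
    calc |(|x|) ^ p - |u| ^ p| ≤ |(|x| - |u|)| ^ p :=
          abs_rpow_sub_rpow_le_rpow_abs_sub (abs_nonneg x) (abs_nonneg u) hp0.le hp1
      _ ≤ |v| ^ p :=
          rpow_le_rpow (abs_nonneg _) ((abs_abs_sub_abs_le_abs_sub x u).trans hxu) hp0.le
  have := abs_sub_sub_deriv_mul_le (fun x _ => hasDerivAt_oddRpow hp0 x) hf'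
  rwa [add_sub_cancel_left, mul_assoc (p + 1) (|v| ^ p),
    ← rpow_add_one' (abs_nonneg v) (by linarith)] at this

lemma abs_oddRpow_add_sub_sub_le_of_abs_le (hp0 : 0 < p) (hp1 : p ≤ 1) {u v : ℝ} (hu : 0 < u)
    (hv : |v| ≤ u / 2) :
    |oddRpow p (u + v) - oddRpow p u - (p + 1) * |u| ^ p * v| ≤
      (p + 1) * p * (u / 2) ^ (p - 1) * v ^ 2 := by
  have hf' : ∀ x ∈ uIcc u (u + v),
      |(p + 1) * |x| ^ p - (p + 1) * |u| ^ p| ≤ (p + 1) * p * (u / 2) ^ (p - 1) * |v| := by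
    intro x hx
    have hxu : |x - u| ≤ |v| := by simpa using abs_sub_left_of_mem_uIcc hx
    have hx : u / 2 ≤ x := by linarith [neg_abs_le (x - u)]
    rw [← mul_sub, abs_mul, abs_of_pos (by linarith), abs_of_pos hu,
      abs_of_pos (show 0 < x by linarith), mul_assoc (p + 1), mul_assoc (p + 1)]
    gcongr
    calc |x ^ p - u ^ p| ≤ p * (u / 2) ^ (p - 1) * |x - u| :=
          abs_rpow_sub_rpow_le_mul_abs_sub hp0.le hp1 (by positivity) hx (by linarith)
      _ ≤ p * (u / 2) ^ (p - 1) * |v| := by gcongr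
  have := abs_sub_sub_deriv_mul_le (fun x _ => hasDerivAt_oddRpow hp0 x) hf'
  rwa [add_sub_cancel_left, mul_assoc _ |v|, ← sq, sq_abs] at this

lemma abs_oddRpow_add_sub_sub_le_sq (hp0 : 0 < p) (hp1 : p ≤ 1) {u : ℝ} (hu : 0 < u) (v : ℝ) :
    |oddRpow p (u + v) - oddRpow p u - (p + 1) * |u| ^ p * v| ≤
      (p + 1) * (u / 2) ^ (p - 1) * v ^ 2 := by
  rcases le_or_gt |v| (u / 2) with hv | hv
  · refine (abs_oddRpow_add_sub_sub_le_of_abs_le hp0 hp1 hu hv).trans ?_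
    gcongr
    exact mul_le_of_le_one_right (by linarith) hp1
  · refine (abs_oddRpow_add_sub_sub_le_rpow hp0 hp1 u v).trans ?_
    have hv0 : 0 < |v| := by linarith
    have hsplit : |v| ^ (p + 1) = |v| ^ (p - 1) * v ^ 2 := by
      rw [← sq_abs, ← rpow_two, ← rpow_add hv0]
      ring_nf
    rw [hsplit, ← mul_assoc]
    refine mul_le_mul_of_nonneg_right (mul_le_mul_of_nonneg_left ?_ (by linarith)) (sq_nonneg v)
    exact rpow_le_rpow_of_nonpos (by positivity) hv.le (by linarith)

end TaylorRemainder

theorem stmt9 (t : ℝ) (ht0 : 0 < t) (ht1 : t < 1) :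
    ∃ C > 0, ∀ u : ℝ, 0 < u → ∀ v : ℝ,
      |(|u + v|) ^ t * (u + v) - u ^ (t + 1) - (1 + t) * u ^ t * v| ≤
        C * min (u ^ (t - 1) * v ^ 2) (|v| ^ (t + 1)) := by
  refine ⟨4, by norm_num, fun u hu v => ?_⟩
  have hE : (|u + v|) ^ t * (u + v) - u ^ (t + 1) - (1 + t) * u ^ t * v =
      oddRpow t (u + v) - oddRpow t u - (t + 1) * |u| ^ t * v := by
    rw [oddRpow, oddRpow, abs_of_pos hu, rpow_add_one hu.ne', add_comm 1 t]
  rw [hE, mul_min_of_nonneg _ _ (by norm_num)]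
  refine le_min ?_ ?_
  · calc _ ≤ (t + 1) * (u / 2) ^ (t - 1) * v ^ 2 :=
          abs_oddRpow_add_sub_sub_le_sq ht0 ht1.le hu v
      _ ≤ 2 * (2 * u ^ (t - 1)) * v ^ 2 := by
          gcongr
          · linarith
          · exact rpow_div_two_le hu.le (by linarith)
      _ = 4 * (u ^ (t - 1) * v ^ 2) := by ring
  · calc _ ≤ (t + 1) * |v| ^ (t + 1) := abs_oddRpow_add_sub_sub_le_rpow ht0 ht1.le u v
      _ ≤ 4 * |v| ^ (t + 1) := by gcongr; linarith
end

section
/- Let t ≥ 1 be a real number. There exists a constant C > 0 depending only on t such that for every u > 0 and every v ∈ ℝ one has | |u + v|^t·(u + v) − u^{t+1} − (1 + t)·u^t·v | ≤ C · ( u^{t−1}·v² + |v|^{t+1} ). -/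
/-!
For `|v| ≤ u / 2` the point `u + v` stays in `[u/2, 3u/2]`, where `w ↦ w ^ (t + 1)` is smooth;
the mean value theorem applied to `w ↦ w ^ (t + 1) - (t + 1) u ^ t w`, whose derivative
`(t + 1) (w ^ t - u ^ t)` is `O(u ^ (t - 1) |w - u|)` there, gives the quadratic error
`O(u ^ (t - 1) v ^ 2)`. For `u < 2 |v|` every term on the left is `O(|v| ^ (t + 1))`.
-/

open Set Real

lemma abs_rpow_sub_rpow_le {t b x y : ℝ} (ht : 1 ≤ t) (hx : x ∈ Icc 0 b)
    (hy : y ∈ Icc 0 b) :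
    |x ^ t - y ^ t| ≤ t * b ^ (t - 1) * |x - y| := by
  have hderiv : ∀ z ∈ Icc 0 b,
      HasDerivWithinAt (fun w : ℝ => w ^ t) (t * z ^ (t - 1)) (Icc 0 b) z :=
    fun z _ => (hasDerivAt_rpow_const (Or.inr ht)).hasDerivWithinAt
  have hbound : ∀ z ∈ Icc 0 b, ‖t * z ^ (t - 1)‖ ≤ t * b ^ (t - 1) := by
    intro z hz
    rw [norm_of_nonneg (by have := hz.1; positivity)]
    exact mul_le_mul_of_nonneg_left (rpow_le_rpow hz.1 hz.2 (by linarith)) (by linarith)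
  simpa only [norm_eq_abs] using
    (convex_Icc 0 b).norm_image_sub_le_of_norm_hasDerivWithin_le hderiv hbound hy hx

lemma abs_rpow_add_one_sub_taylor_le {t u v : ℝ} (ht : 1 ≤ t) (hu : 0 ≤ u)
    (huv : 0 ≤ u + v) :
    |(u + v) ^ (t + 1) - u ^ (t + 1) - (t + 1) * u ^ t * v| ≤
      (t + 1) * t * (u + |v|) ^ (t - 1) * v ^ 2 := by
  have hmem : ∀ x ∈ uIcc u (u + v), x ∈ Icc 0 (u + |v|) ∧ |x - u| ≤ |v| := by
    intro x hx
    have := neg_abs_le v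
    have := le_abs_self v
    rcases mem_uIcc.mp hx with ⟨h₁, h₂⟩ | ⟨h₁, h₂⟩ <;>
      exact ⟨⟨by linarith, by linarith⟩, abs_le.mpr ⟨by linarith, by linarith⟩⟩
  have hderiv : ∀ x ∈ uIcc u (u + v), HasDerivWithinAt
      (fun w : ℝ => w ^ (t + 1) - (t + 1) * u ^ t * w) ((t + 1) * (x ^ t - u ^ t))
      (uIcc u (u + v)) x := by
    intro x _
    have hpow : HasDerivAt (fun w : ℝ => w ^ (t + 1)) ((t + 1) * x ^ t) x := by
      simpa using hasDerivAt_rpow_const (x := x) (Or.inr (by linarith : 1 ≤ t + 1))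
    exact ((hpow.sub ((hasDerivAt_id' x).const_mul ((t + 1) * u ^ t))).congr_deriv
      (by ring)).hasDerivWithinAt
  have hbound : ∀ x ∈ uIcc u (u + v),
      ‖(t + 1) * (x ^ t - u ^ t)‖ ≤ (t + 1) * t * (u + |v|) ^ (t - 1) * |v| := by
    intro x hx
    obtain ⟨hx, hxu⟩ := hmem x hx
    have hlip := abs_rpow_sub_rpow_le ht hx ⟨hu, by linarith [abs_nonneg v]⟩
    rw [norm_mul, norm_eq_abs, norm_eq_abs, abs_of_nonneg (by linarith : (0 : ℝ) ≤ t + 1),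
      mul_assoc (t + 1), mul_assoc (t + 1)]
    gcongr
    exact hlip.trans (by gcongr)
  have hmvt := (convex_uIcc u (u + v)).norm_image_sub_le_of_norm_hasDerivWithin_le hderiv hbound
    left_mem_uIcc right_mem_uIcc
  rw [norm_eq_abs, norm_eq_abs, add_sub_cancel_left] at hmvt
  calc |(u + v) ^ (t + 1) - u ^ (t + 1) - (t + 1) * u ^ t * v|
      = |(u + v) ^ (t + 1) - (t + 1) * u ^ t * (u + v) - (u ^ (t + 1) - (t + 1) * u ^ t * u)| := by
        congr 1; ring
    _ ≤ (t + 1) * t * (u + |v|) ^ (t - 1) * |v| * |v| := hmvt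
    _ = (t + 1) * t * (u + |v|) ^ (t - 1) * v ^ 2 := by rw [mul_assoc _ |v|, abs_mul_abs_self, sq]

lemma abs_odd_rpow_sub_taylor_le_of_le_two_mul_abs {t u v : ℝ} (ht : 0 ≤ t) (hu : 0 ≤ u)
    (huv : u ≤ 2 * |v|) :
    |(|u + v|) ^ t * (u + v) - u ^ (t + 1) - (1 + t) * u ^ t * v| ≤
      (3 ^ (t + 1) + 2 ^ (t + 1) + (1 + t) * 2 ^ t) * |v| ^ (t + 1) := by
  have hscale : ∀ {x c p : ℝ}, 0 ≤ x → 0 ≤ p → 0 ≤ c → x ≤ c * |v| →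
      x ^ p ≤ c ^ p * |v| ^ p :=
    fun hx hp hc hxc => by
      rw [← mul_rpow hc (abs_nonneg v)]
      exact rpow_le_rpow hx hxc hp
  have ht1 : t + 1 ≠ 0 := by linarith
  have hsum : |u + v| ≤ 3 * |v| := (abs_add_le u v).trans (by rw [abs_of_nonneg hu]; linarith)
  have hodd : |(|u + v|) ^ t * (u + v)| ≤ 3 ^ (t + 1) * |v| ^ (t + 1) := by
    rw [abs_mul, abs_of_nonneg (by positivity), ← rpow_add_one' (abs_nonneg _) ht1]
    exact hscale (abs_nonneg _) (by linarith) zero_le_three hsum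
  have hpow : |u ^ (t + 1)| ≤ 2 ^ (t + 1) * |v| ^ (t + 1) := by
    rw [abs_of_nonneg (by positivity)]
    exact hscale hu (by linarith) zero_le_two huv
  have hlin : |(1 + t) * u ^ t * v| ≤ (1 + t) * 2 ^ t * |v| ^ (t + 1) := by
    rw [abs_mul, abs_of_nonneg (by positivity), rpow_add_one' (abs_nonneg _) ht1, mul_assoc,
      mul_assoc, ← mul_assoc (2 ^ t)]
    gcongr
    exact hscale hu ht zero_le_two huv
  have htri₁ := abs_sub ((|u + v|) ^ t * (u + v) - u ^ (t + 1)) ((1 + t) * u ^ t * v)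
  have htri₂ := abs_sub ((|u + v|) ^ t * (u + v)) (u ^ (t + 1))
  linarith

theorem stmt10 (t : ℝ) (ht : 1 ≤ t) :
    ∃ C > 0, ∀ u : ℝ, 0 < u → ∀ v : ℝ,
      |(|u + v|) ^ t * (u + v) - u ^ (t + 1) - (1 + t) * u ^ t * v| ≤
        C * (u ^ (t - 1) * v ^ 2 + |v| ^ (t + 1)) := by
  have ht0 : 0 < t := by linarith
  set A : ℝ := (t + 1) * t * (3 / 2) ^ (t - 1)
  set K : ℝ := 3 ^ (t + 1) + 2 ^ (t + 1) + (1 + t) * 2 ^ t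
  refine ⟨A + K, by positivity, fun u hu v => ?_⟩
  have hX : 0 ≤ u ^ (t - 1) * v ^ 2 := by positivity
  have hY : 0 ≤ |v| ^ (t + 1) := by positivity
  rcases le_or_gt |v| (u / 2) with hv | hv
  · have huv : 0 < u + v := by linarith [neg_abs_le v]
    calc |(|u + v|) ^ t * (u + v) - u ^ (t + 1) - (1 + t) * u ^ t * v|
        = |(u + v) ^ (t + 1) - u ^ (t + 1) - (t + 1) * u ^ t * v| := by
          rw [abs_of_pos huv, ← rpow_add_one huv.ne', add_comm 1 t]
      _ ≤ (t + 1) * t * (u + |v|) ^ (t - 1) * v ^ 2 :=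
          abs_rpow_add_one_sub_taylor_le ht hu.le huv.le
      _ ≤ (t + 1) * t * ((3 / 2) ^ (t - 1) * u ^ (t - 1)) * v ^ 2 := by
          rw [← mul_rpow (by norm_num) hu.le]
          gcongr
          linarith
      _ = A * (u ^ (t - 1) * v ^ 2) := by ring
      _ ≤ (A + K) * (u ^ (t - 1) * v ^ 2 + |v| ^ (t + 1)) :=
          mul_le_mul (le_add_of_nonneg_right (by positivity)) (le_add_of_nonneg_right hY) hX
            (by positivity)
  · calc |(|u + v|) ^ t * (u + v) - u ^ (t + 1) - (1 + t) * u ^ t * v|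
        ≤ K * |v| ^ (t + 1) :=
          abs_odd_rpow_sub_taylor_le_of_le_two_mul_abs ht0.le hu.le (by linarith)
      _ ≤ (A + K) * (u ^ (t - 1) * v ^ 2 + |v| ^ (t + 1)) :=
          mul_le_mul (le_add_of_nonneg_left (by positivity)) (le_add_of_nonneg_left hX) hY
            (by positivity)
end
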